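/- The vector polynomials p_n^{(a,b),1}(t) := P_n^{(a,b)}(2t−1)·(1,1)ᵀ and p_n^{(a,b),2}(t) := t·P_{n−1}^{(a,b+2)}(2t−1)·(1,−1)ᵀ (n ≥ 1) are mutually orthogonal in the inner product ⟨f,g⟩ = ∫₀¹ f(t)ᵀ g(t) (1−t)^a t^b dt: any two distinct members of the combined family are orthogonal. -/

import Mathlib

/-!
Substituting `x = 2t - 1` turns `P_n^{(a,b)}(x)` into `∑ₛ cₛ (t - 1)^s t^(n - s)`, so every
moment `∫₀¹ (t - 1)^e t^f P_n^{(a,b)}(2t - 1) (1 - t)^a t^b dt` is a finite sum of Beta integrals.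
Writing the coefficients and the Beta values through `Γ`, the `s`-th term becomes a constant times
`(-1)^s (n choose s) Q(s)` with `Q` a polynomial of degree `e + f`; for `e + f < n` the sum is an
`n`-th forward difference of `Q` and vanishes. Hence `P_n^{(a,b)}(2t - 1)` is orthogonal to every
polynomial of lower degree. The directions `(1, 1)` and `(1, -1)` are orthogonal with squared
norm `2`, and the factor `t²` of the second family moves the weight from `t^b` to `t^(b+2)`.
-/

open intervalIntegral Finset Polynomial
open MeasureTheory (volume)

noncomputable def gbinom (α : ℝ) (k : ℕ) : ℝ :=
  (∏ i ∈ Finset.range k, (α - i)) / k.factorial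

noncomputable def jacobiP (a b : ℝ) (n : ℕ) (x : ℝ) : ℝ :=
  ∑ s ∈ Finset.range (n + 1),
    gbinom (n + a) (n - s) * gbinom (n + b) s * ((x - 1) / 2) ^ s * ((x + 1) / 2) ^ (n - s)

/-- `p_n^{(a,b),1}(t) = P_n^{(a,b)}(2t−1)(1,1)ᵀ`. -/
noncomputable def pvec1 (a b : ℝ) (n : ℕ) (t : ℝ) : Fin 2 → ℝ :=
  ![jacobiP a b n (2 * t - 1), jacobiP a b n (2 * t - 1)]

/-- `p_n^{(a,b),2}(t) = t P_{n−1}^{(a,b+2)}(2t−1)(1,−1)ᵀ`. -/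
noncomputable def pvec2 (a b : ℝ) (n : ℕ) (t : ℝ) : Fin 2 → ℝ :=
  ![t * jacobiP a (b + 2) (n - 1) (2 * t - 1), -(t * jacobiP a (b + 2) (n - 1) (2 * t - 1))]

/-- The inner product `⟨f,g⟩ = ∫₀¹ f(t)ᵀ g(t) (1−t)^a t^b dt`. -/
noncomputable def vip (a b : ℝ) (f g : ℝ → Fin 2 → ℝ) : ℝ :=
  ∫ t in (0 : ℝ)..1, (f t 0 * g t 0 + f t 1 * g t 1) * (1 - t) ^ a * t ^ b

theorem Polynomial.sum_range_neg_one_pow_mul_choose_mul_eval_eq_zero {R : Type*} [CommRing R]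
    {P : R[X]} {n : ℕ} (hP : P.natDegree < n) :
    ∑ s ∈ range (n + 1), (-1) ^ s * (n.choose s : R) * P.eval (s : R) = 0 := by
  have hΔ := congrFun (P.fwdDiff_iter_eq_zero_of_degree_lt hP) 0
  rw [fwdDiff_iter_eq_sum_shift] at hΔ
  calc ∑ s ∈ range (n + 1), (-1) ^ s * (n.choose s : R) * P.eval (s : R)
      = (-1) ^ n * ∑ s ∈ range (n + 1),
          ((-1 : ℤ) ^ (n - s) * n.choose s) • P.eval (0 + s • (1 : R)) := by
        rw [mul_sum]
        refine sum_congr rfl fun s hs => ?_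
        have hsign : (-1 : R) ^ n * (-1) ^ (n - s) = (-1) ^ s := by
          rw [← pow_add, show n + (n - s) = s + 2 * (n - s) by grind, pow_add, pow_mul,
            neg_one_sq, one_pow, mul_one]
        simp only [zero_add, nsmul_eq_mul, mul_one, zsmul_eq_mul, Int.cast_mul, Int.cast_pow,
          Int.cast_neg, Int.cast_one, Int.cast_natCast, ← hsign]
        ring
    _ = 0 := by rw [hΔ, Pi.zero_apply, mul_zero]

theorem Real.Gamma_add_nat_eq_ascPochhammer_mul {x : ℝ} (hx : 0 < x) (m : ℕ) :
    Real.Gamma (x + m) = (ascPochhammer ℝ m).eval x * Real.Gamma x := by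
  induction m with
  | zero => simp
  | succ m ih =>
    rw [Nat.cast_succ, ← add_assoc, Real.Gamma_add_one (by positivity), ih,
      ascPochhammer_succ_right, eval_mul, eval_add, eval_X, eval_natCast]
    ring

theorem gbinom_mul_factorial (x : ℝ) (k : ℕ) :
    gbinom x k * k.factorial = (ascPochhammer ℝ k).eval (x - k + 1) := by
  rw [gbinom, div_mul_cancel₀ _ (by positivity), ← descPochhammer_eval_eq_prod_range,
    descPochhammer_eval_eq_ascPochhammer]

theorem gbinom_mul_factorial_mul_Gamma {x : ℝ} {k : ℕ} (hk : (k : ℝ) < x + 1) :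
    gbinom x k * k.factorial * Real.Gamma (x - k + 1) = Real.Gamma (x + 1) := by
  rw [gbinom_mul_factorial, ← Real.Gamma_add_nat_eq_ascPochhammer_mul (by linarith)]
  congr 1
  ring

theorem integral_one_sub_rpow_mul_rpow {a b : ℝ} (ha : -1 < a) (hb : -1 < b) :
    ∫ t in (0 : ℝ)..1, (1 - t) ^ a * t ^ b =
      Real.Gamma (a + 1) * Real.Gamma (b + 1) / Real.Gamma (a + b + 2) := by
  have hβ := Complex.betaIntegral_eq_Gamma_mul_div (b + 1) (a + 1)
    (by simp; linarith) (by simp; linarith)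
  have hβ_real : Complex.betaIntegral (b + 1) (a + 1) =
      ((∫ t in (0 : ℝ)..1, (1 - t) ^ a * t ^ b : ℝ) : ℂ) := by
    rw [Complex.betaIntegral, ← integral_ofReal]
    refine integral_congr fun t ht => ?_
    rw [Set.uIcc_of_le zero_le_one] at ht
    simp only [add_sub_cancel_right]
    rw [Complex.ofReal_mul, Complex.ofReal_cpow (by linarith [ht.2]),
      Complex.ofReal_cpow ht.1, Complex.ofReal_sub, Complex.ofReal_one, mul_comm]
  rw [hβ_real, show (b : ℂ) + 1 + (a + 1) = ((a + b + 2 : ℝ) : ℂ) by push_cast; ring] at hβ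
  rw [← Complex.ofReal_one, ← Complex.ofReal_add, ← Complex.ofReal_add, Complex.Gamma_ofReal,
    Complex.Gamma_ofReal, Complex.Gamma_ofReal] at hβ
  rw [mul_comm (Real.Gamma _)]
  exact_mod_cast hβ

theorem intervalIntegrable_one_sub_rpow_mul_rpow {a b : ℝ} (ha : -1 < a) (hb : -1 < b) :
    IntervalIntegrable (fun t : ℝ => (1 - t) ^ a * t ^ b) volume 0 1 := by
  refine intervalIntegrable_of_integral_ne_zero ?_
  rw [integral_one_sub_rpow_mul_rpow ha hb]
  exact (div_pos (mul_pos (Real.Gamma_pos_of_pos (by linarith))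
    (Real.Gamma_pos_of_pos (by linarith))) (Real.Gamma_pos_of_pos (by linarith))).ne'

section JacobiWeight

variable {a b : ℝ}

theorem intervalIntegrable_mul_one_sub_rpow_mul_rpow (ha : -1 < a) (hb : -1 < b) {g : ℝ → ℝ}
    (hg : Continuous g) :
    IntervalIntegrable (fun t => g t * ((1 - t) ^ a * t ^ b)) volume 0 1 :=
  (intervalIntegrable_one_sub_rpow_mul_rpow ha hb).continuousOn_mul hg.continuousOn

theorem integral_sub_one_pow_mul_pow_mul_one_sub_rpow_mul_rpow (ha : -1 < a) (hb : -1 < b)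
    (E F : ℕ) :
    ∫ t in (0 : ℝ)..1, (t - 1) ^ E * t ^ F * ((1 - t) ^ a * t ^ b) =
      (-1) ^ E * (Real.Gamma (a + E + 1) * Real.Gamma (b + F + 1) /
        Real.Gamma (a + b + (E + F : ℕ) + 2)) := by
  have hE : -1 < a + E := by linarith [E.cast_nonneg (α := ℝ)]
  have hF : -1 < b + F := by linarith [F.cast_nonneg (α := ℝ)]
  rw [integral_congr_Ioo_of_le zero_le_one
      (g := fun t => (-1) ^ E * ((1 - t) ^ (a + E) * t ^ (b + F))) fun t ht => ?_,
    integral_const_mul, integral_one_sub_rpow_mul_rpow hE hF]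
  · rw [show a + E + (b + F) + 2 = a + b + (E + F : ℕ) + 2 by push_cast; ring]
  · dsimp only
    rw [Real.rpow_add_natCast (by linarith [ht.2]), Real.rpow_add_natCast ht.1.ne',
      show t - 1 = -1 * (1 - t) by ring, mul_pow]
    ring

theorem continuous_jacobiP (n : ℕ) : Continuous (jacobiP a b n) := by
  unfold jacobiP
  fun_prop

theorem jacobiP_two_mul_sub_one (n : ℕ) (t : ℝ) :
    jacobiP a b n (2 * t - 1) =
      ∑ s ∈ range (n + 1),
        gbinom (n + a) (n - s) * gbinom (n + b) s * (t - 1) ^ s * t ^ (n - s) := by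
  simp only [jacobiP, show (2 * t - 1 - 1) / 2 = t - 1 by ring,
    show (2 * t - 1 + 1) / 2 = t by ring]

theorem integral_jacobiP_mul_eq_sum (ha : -1 < a) (hb : -1 < b) (n : ℕ) {g : ℝ → ℝ}
    (hg : Continuous g) :
    ∫ t in (0 : ℝ)..1, jacobiP a b n (2 * t - 1) * g t * ((1 - t) ^ a * t ^ b) =
      ∑ s ∈ range (n + 1), gbinom (n + a) (n - s) * gbinom (n + b) s *
        ∫ t in (0 : ℝ)..1, (t - 1) ^ s * t ^ (n - s) * g t * ((1 - t) ^ a * t ^ b) := by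
  have hexpand : ∀ t, jacobiP a b n (2 * t - 1) * g t * ((1 - t) ^ a * t ^ b) =
      ∑ s ∈ range (n + 1), gbinom (n + a) (n - s) * gbinom (n + b) s *
        ((t - 1) ^ s * t ^ (n - s) * g t * ((1 - t) ^ a * t ^ b)) := fun t => by
    rw [jacobiP_two_mul_sub_one, sum_mul, sum_mul]
    exact sum_congr rfl fun s _ => by ring
  simp_rw [hexpand]
  rw [integral_finsetSum fun s _ => ?_]
  · simp_rw [integral_const_mul]
  · refine (intervalIntegrable_mul_one_sub_rpow_mul_rpow ha hb ?_).const_mul _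
    fun_prop

theorem gbinom_mul_gbinom_mul_Gamma_mul_Gamma (ha : -1 < a) (hb : -1 < b) (e f : ℕ) {n s : ℕ}
    (hs : s ≤ n) :
    gbinom (n + a) (n - s) * gbinom (n + b) s *
        (Real.Gamma (a + (s + e : ℕ) + 1) * Real.Gamma (b + (n - s + f : ℕ) + 1)) =
      Real.Gamma (n + a + 1) * Real.Gamma (n + b + 1) / n.factorial *
        (n.choose s * ((ascPochhammer ℝ e).comp (X + C (a + 1)) *
          (ascPochhammer ℝ f).comp (C (b + n + 1) - X)).eval (s : ℝ)) := by
  have hs' : ((n - s : ℕ) : ℝ) = n - s := Nat.cast_sub hs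
  have hsR : (s : ℝ) ≤ n := by exact_mod_cast hs
  have hs0 : (0 : ℝ) ≤ s := s.cast_nonneg
  have hA := gbinom_mul_factorial_mul_Gamma (x := n + a) (k := n - s) (by linarith)
  have hB := gbinom_mul_factorial_mul_Gamma (x := n + b) (k := s) (by linarith)
  have hA' := Real.Gamma_add_nat_eq_ascPochhammer_mul (x := a + s + 1) (by linarith) e
  have hB' := Real.Gamma_add_nat_eq_ascPochhammer_mul (x := b + n - s + 1) (by linarith) f
  have hchoose : (n.choose s : ℝ) * s.factorial * (n - s).factorial = n.factorial := by
    exact_mod_cast Nat.choose_mul_factorial_mul_factorial hs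
  have hchoose_ne : (n.choose s : ℝ) ≠ 0 := by exact_mod_cast (Nat.choose_pos hs).ne'
  rw [hs'] at hA
  push_cast [hs']
  rw [← hA, ← hB, ← hchoose, show a + (s + e) + 1 = a + s + 1 + e by ring,
    show b + (n - s + f) + 1 = b + n - s + 1 + f by ring, hA', hB']
  simp only [eval_mul, eval_comp, eval_add, eval_sub, eval_X, eval_C]
  field_simp
  ring_nf

theorem integral_jacobiP_mul_sub_one_pow_mul_pow_eq_zero (ha : -1 < a) (hb : -1 < b)
    {e f n : ℕ} (hefn : e + f < n) :
    ∫ t in (0 : ℝ)..1, jacobiP a b n (2 * t - 1) * ((t - 1) ^ e * t ^ f) * ((1 - t) ^ a * t ^ b)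
      = 0 := by
  set Q : ℝ[X] := (ascPochhammer ℝ e).comp (X + C (a + 1)) *
    (ascPochhammer ℝ f).comp (C (b + n + 1) - X)
  have hQ : Q.natDegree < n := by
    refine (natDegree_mul_le.trans (add_le_add natDegree_comp_le natDegree_comp_le)).trans_lt ?_
    have hX : (C (b + n + 1) - X : ℝ[X]).natDegree ≤ 1 :=
      (natDegree_sub_le _ _).trans (by rw [natDegree_C, natDegree_X]; simp)
    simp only [ascPochhammer_natDegree, natDegree_X_add_C, mul_one]
    nlinarith
  set K := Real.Gamma (n + a + 1) * Real.Gamma (n + b + 1) / n.factorial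
  have hterm : ∀ s ∈ range (n + 1), gbinom (n + a) (n - s) * gbinom (n + b) s *
      ∫ t in (0 : ℝ)..1,
        (t - 1) ^ s * t ^ (n - s) * ((t - 1) ^ e * t ^ f) * ((1 - t) ^ a * t ^ b)
      = (-1) ^ e * K / Real.Gamma (a + b + (e + f + n : ℕ) + 2) *
          ((-1) ^ s * n.choose s * Q.eval (s : ℝ)) := fun s hs => by
    have hsn : s ≤ n := Nat.lt_succ_iff.mp (mem_range.mp hs)
    have hmono : ∀ t : ℝ, (t - 1) ^ s * t ^ (n - s) * ((t - 1) ^ e * t ^ f) =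
        (t - 1) ^ (s + e) * t ^ (n - s + f) := fun t => by ring
    simp_rw [hmono]
    rw [integral_sub_one_pow_mul_pow_mul_one_sub_rpow_mul_rpow ha hb,
      show s + e + (n - s + f) = e + f + n by omega]
    linear_combination (-1) ^ (s + e) / Real.Gamma (a + b + (e + f + n : ℕ) + 2) *
      gbinom_mul_gbinom_mul_Gamma_mul_Gamma ha hb e f hsn
  rw [integral_jacobiP_mul_eq_sum ha hb n (by fun_prop), sum_congr rfl hterm, ← mul_sum,
    sum_range_neg_one_pow_mul_choose_mul_eval_eq_zero hQ, mul_zero]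

theorem integral_jacobiP_mul_jacobiP_eq_zero (ha : -1 < a) (hb : -1 < b) {k j : ℕ}
    (hkj : k ≠ j) :
    ∫ t in (0 : ℝ)..1,
      jacobiP a b k (2 * t - 1) * jacobiP a b j (2 * t - 1) * ((1 - t) ^ a * t ^ b) = 0 := by
  wlog hlt : k < j generalizing k j
  · simp_rw [mul_comm (jacobiP a b k _)]
    exact this hkj.symm (by omega)
  rw [integral_jacobiP_mul_eq_sum ha hb k (g := fun t => jacobiP a b j (2 * t - 1))
    ((continuous_jacobiP j).comp (by fun_prop))]
  refine sum_eq_zero fun s hs => ?_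
  have hsk : s + (k - s) < j := by have := mem_range.mp hs; omega
  simp_rw [mul_comm ((_ - 1) ^ s * _) (jacobiP a b j _),
    integral_jacobiP_mul_sub_one_pow_mul_pow_eq_zero ha hb hsk, mul_zero]

theorem vip_pvec1_pvec1 (k j : ℕ) :
    vip a b (pvec1 a b k) (pvec1 a b j) =
      2 * ∫ t in (0 : ℝ)..1,
        jacobiP a b k (2 * t - 1) * jacobiP a b j (2 * t - 1) * ((1 - t) ^ a * t ^ b) := by
  rw [vip, ← integral_const_mul]
  refine integral_congr fun t _ => ?_
  simp only [pvec1, Matrix.cons_val_zero, Matrix.cons_val_one]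
  ring

theorem vip_pvec2_pvec2 (k j : ℕ) :
    vip a b (pvec2 a b k) (pvec2 a b j) =
      2 * ∫ t in (0 : ℝ)..1, jacobiP a (b + 2) (k - 1) (2 * t - 1) *
        jacobiP a (b + 2) (j - 1) (2 * t - 1) * ((1 - t) ^ a * t ^ (b + 2)) := by
  rw [vip, ← integral_const_mul]
  refine integral_congr_Ioo_of_le zero_le_one fun t ht => ?_
  simp only [pvec2, Matrix.cons_val_zero, Matrix.cons_val_one]
  rw [Real.rpow_add ht.1, Real.rpow_two]
  ring

theorem vip_pvec1_pvec2 (k j : ℕ) : vip a b (pvec1 a b k) (pvec2 a b j) = 0 := by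
  simp [vip, pvec1, pvec2]

end JacobiWeight

/-- Any two distinct members of the combined family `{p_n^{(a,b),1}} ∪ {p_n^{(a,b),2}}_{n≥1}`
are orthogonal. -/
theorem pvec_orthogonal (a b : ℝ) (ha : -1 < a) (hb : -1 < b) :
    (∀ k j : ℕ, k ≠ j → vip a b (pvec1 a b k) (pvec1 a b j) = 0) ∧
    (∀ k j : ℕ, 1 ≤ k → 1 ≤ j → k ≠ j → vip a b (pvec2 a b k) (pvec2 a b j) = 0) ∧
    (∀ k j : ℕ, 1 ≤ j → vip a b (pvec1 a b k) (pvec2 a b j) = 0) := by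
  refine ⟨fun k j hkj => ?_, fun k j hk hj hkj => ?_, fun k j _ => vip_pvec1_pvec2 k j⟩
  · rw [vip_pvec1_pvec1, integral_jacobiP_mul_jacobiP_eq_zero ha hb hkj, mul_zero]
  · have hb2 : -1 < b + 2 := by linarith
    rw [vip_pvec2_pvec2, integral_jacobiP_mul_jacobiP_eq_zero ha hb2 (by omega), mul_zero]
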